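/- arXiv:1612.09107 — 2 statements merged into one kernel-verified Lean document; each statement's English description precedes it below -/
import Mathlib

section
/- In the root system of gl(n,ℂ) with weights ε_i − ε_j (i ≠ j), suppose α₁, …, α_r are pairwise distinct elements of {ε_i − ε_j : 1 ≤ i ≠ j ≤ n} with r ≤ n − 1 and α₁ + ⋯ + α_r = (n−1)ε₁ − ε₂ − ⋯ − ε_n. Then r = n − 1 and {α₁,…,α_r} = {ε₁ − ε₂, ε₁ − ε₃, …, ε₁ − ε_n}. -/
/-!
Every root `ε_i − ε_j` has first coordinate at most `1`, with equality exactly for the roots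
`ε₁ − ε_j`. The first coordinate of the sum is `n − 1` while there are at most `n − 1`
summands, so there are exactly `n − 1` of them and each one is some `ε₁ − ε_j`. There are
only `n − 1` such roots, so `S` consists of all of them.
-/

open Finset

namespace Finset

theorem card_eq_and_forall_eq_one_of_le_sum {ι : Type*} (s : Finset ι) (f : ι → ℤ) (m : ℕ)
    (hf : ∀ i ∈ s, f i ≤ 1) (hcard : #s ≤ m) (hsum : (m : ℤ) ≤ ∑ i ∈ s, f i) :
    #s = m ∧ ∀ i ∈ s, f i = 1 := by
  have hle : ∑ i ∈ s, f i ≤ ∑ _i ∈ s, (1 : ℤ) := sum_le_sum hf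
  rw [sum_const, nsmul_one] at hle
  have hcard_eq : #s = m := by omega
  refine ⟨hcard_eq, (sum_eq_sum_iff_of_le hf).mp ?_⟩
  rw [sum_const, nsmul_one]
  omega

end Finset

section SingleSubSingle

variable {ι : Type*} [DecidableEq ι]

theorem single_sub_single_apply_le_one (i j k : ι) :
    (Pi.single i 1 - Pi.single j 1 : ι → ℤ) k ≤ 1 := by
  simp only [Pi.sub_apply, Pi.single_apply]
  split_ifs <;> omega

theorem single_sub_single_apply_eq_one_iff {i j k : ι} :
    (Pi.single i 1 - Pi.single j 1 : ι → ℤ) k = 1 ↔ k = i ∧ k ≠ j := by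
  simp only [Pi.sub_apply, Pi.single_apply]
  split_ifs <;> simp_all

theorem single_sub_single_injective (i : ι) :
    Function.Injective fun j : ι => (Pi.single i 1 - Pi.single j 1 : ι → ℤ) := by
  intro j k hjk
  have hj := congrFun (sub_right_injective hjk) j
  simp only [Pi.single_apply] at hj
  split_ifs at hj with h <;> simp_all

theorem card_image_single_sub_single [Fintype ι] (i : ι) :
    #((univ.filter fun j : ι => j ≠ i).image
      fun j => (Pi.single i 1 - Pi.single j 1 : ι → ℤ)) = Fintype.card ι - 1 := by
  rw [card_image_of_injective _ (single_sub_single_injective i), filter_ne',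
    card_erase_of_mem (mem_univ i), card_univ]

end SingleSubSingle

/-- If `α₁, …, α_r` are pairwise distinct roots `ε_i − ε_j` of `gl(n,ℂ)` with `r ≤ n − 1`
and sum `(n−1)ε₁ − ε₂ − ⋯ − ε_n`, then `r = n − 1` and the set of roots is
`{ε₁ − ε_j : 2 ≤ j ≤ n}`. -/
theorem stmt_8 (n : ℕ) (hn : 2 ≤ n) (S : Finset (Fin n → ℤ))
    (hroots : ∀ v ∈ S, ∃ i j : Fin n, i ≠ j ∧ v = Pi.single i 1 - Pi.single j 1)
    (hcard : S.card ≤ n - 1)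
    (hsum : (∑ v ∈ S, v) =
      fun k : Fin n => if k = (⟨0, by omega⟩ : Fin n) then (n : ℤ) - 1 else -1) :
    S.card = n - 1 ∧
      S = (Finset.univ.filter fun j : Fin n => j ≠ (⟨0, by omega⟩ : Fin n)).image
            (fun j => Pi.single (⟨0, by omega⟩ : Fin n) 1 - Pi.single j 1) := by
  set e₀ : Fin n := ⟨0, by omega⟩
  have hsum₀ : ((n - 1 : ℕ) : ℤ) ≤ ∑ v ∈ S, v e₀ := by
    have := congrFun hsum e₀
    simp only [Finset.sum_apply, if_true] at this
    omega
  have hle : ∀ v ∈ S, v e₀ ≤ 1 := by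
    intro v hv
    obtain ⟨i, j, -, rfl⟩ := hroots v hv
    exact single_sub_single_apply_le_one i j e₀
  obtain ⟨hcard_eq, hall⟩ := card_eq_and_forall_eq_one_of_le_sum S (· e₀) _ hle hcard hsum₀
  refine ⟨hcard_eq, eq_of_subset_of_card_le ?_ ?_⟩
  · intro v hv
    obtain ⟨i, j, -, rfl⟩ := hroots v hv
    obtain ⟨rfl, hj⟩ := single_sub_single_apply_eq_one_iff.mp (hall _ hv)
    exact mem_image.mpr ⟨j, by simpa [eq_comm] using hj, rfl⟩
  · rw [card_image_single_sub_single, Fintype.card_fin, hcard_eq]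
end

section
/- Suppose α₁, …, α_r are pairwise distinct elements of {ε_i − ε_j : 1 ≤ i ≠ j ≤ n} with r ≤ n(n−1)/2 and α₁ + ⋯ + α_r = (n−1, n−3, …, 3−n, 1−n) ∈ ℤⁿ. Then r = n(n−1)/2 and {α₁,…,α_r} = {ε_i − ε_j : 1 ≤ i < j ≤ n}. -/
/-!
Pair every root with `2ρ = (n-1, n-3, …, 1-n)`: the root `ε_i - ε_j` pairs to `2(j - i)`, which is
positive exactly for the positive roots and never zero. Among sets of roots, the positive roots are
therefore the unique one maximising the total pairing with `2ρ`, and a set of roots summing to `2ρ`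
attains that maximum, since its total pairing is `⟪2ρ, 2ρ⟫`.
-/

open Finset

theorem eq_filter_pos_of_sum_filter_pos_le {ι M : Type*} [DecidableEq ι] [AddCommGroup M]
    [LinearOrder M] [IsOrderedAddMonoid M] {s t : Finset ι} {f : ι → M} (hst : s ⊆ t) (hf : ∀ i ∈ s, f i ≠ 0)
    (h : ∑ i ∈ t.filter (0 < f ·), f i ≤ ∑ i ∈ s, f i) :
    s = t.filter (0 < f ·) := by
  set P := t.filter (0 < f ·)
  have hpos : ∀ i ∈ P \ s, 0 < f i := fun i hi => (mem_filter.mp (mem_sdiff.mp hi).1).2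
  have hneg : ∀ i ∈ s \ P, f i < 0 := by
    intro i hi
    obtain ⟨his, hiP⟩ := mem_sdiff.mp hi
    exact lt_of_le_of_ne (not_lt.mp fun hfi => hiP (mem_filter.mpr ⟨hst his, hfi⟩)) (hf i his)
  have hle : ∑ i ∈ P \ s, f i ≤ ∑ i ∈ s \ P, f i := by
    rw [← sub_nonpos, sum_sdiff_sub_sum_sdiff]
    exact sub_nonpos.mpr h
  have hPs : P \ s = ∅ := by
    by_contra hne
    exact ((sum_pos hpos (nonempty_iff_ne_empty.mpr hne)).trans_le hle).not_ge
      (sum_nonpos fun i hi => (hneg i hi).le)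
  have hsP : s \ P = ∅ := by
    by_contra hne
    exact ((sum_nonneg fun i hi => (hpos i hi).le).trans hle).not_gt
      (sum_neg hneg (nonempty_iff_ne_empty.mpr hne))
  exact (sdiff_eq_empty_iff_subset.mp hsP).antisymm (sdiff_eq_empty_iff_subset.mp hPs)

section Roots

variable {ι : Type*} [DecidableEq ι]

def root (p : ι × ι) : ι → ℤ := Pi.single p.1 1 - Pi.single p.2 1

theorem root_inj {p q : ι × ι} (hp : p.1 ≠ p.2) : root p = root q ↔ p = q := by
  refine ⟨fun h => ?_, congrArg root⟩
  rw [root, root, sub_eq_sub_iff_add_eq_add,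
    Pi.single_add_single_eq_single_add_single one_ne_zero one_ne_zero] at h
  obtain ⟨h1, h2⟩ | ⟨-, h1, -⟩ | ⟨h, -⟩ := h
  · exact Prod.ext h1 h2.symm
  · exact absurd h1 hp
  · exact absurd h (by norm_num)

theorem root_dotProduct [Fintype ι] (p : ι × ι) (w : ι → ℤ) :
    root p ⬝ᵥ w = w p.1 - w p.2 := by
  simp [root, sub_dotProduct]

end Roots

def twoRho (n : ℕ) : Fin n → ℤ := fun k => (n : ℤ) - 1 - 2 * ((k : ℕ) : ℤ)

theorem root_dotProduct_twoRho {n : ℕ} (i j : Fin n) :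
    root (i, j) ⬝ᵥ twoRho n = 2 * (((j : ℕ) : ℤ) - ((i : ℕ) : ℤ)) := by
  simp only [root_dotProduct, twoRho]
  ring

def posRoots (n : ℕ) : Finset (Fin n → ℤ) :=
  (univ.filter fun p : Fin n × Fin n => p.1 < p.2).image root

theorem card_filter_fst_lt_snd (n : ℕ) :
    #(univ.filter fun p : Fin n × Fin n => p.1 < p.2) = n * (n - 1) / 2 := by
  rw [card_filter, Fintype.sum_prod_type]
  simp only [← card_filter, filter_lt_eq_Ioi, Fin.card_Ioi]
  rw [Fin.sum_univ_eq_sum_range (fun i => n - 1 - i), ← sum_range_id, ← sum_range_reflect]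
  exact sum_congr rfl fun i hi => by have := mem_range.mp hi; omega

theorem sum_root_filter_fst_lt_snd (n : ℕ) :
    ∑ p ∈ univ.filter (fun p : Fin n × Fin n => p.1 < p.2), root p = twoRho n := by
  funext k
  have hfst : #{p ∈ {p : Fin n × Fin n | p.1 < p.2} | k = p.1} = #(Ioi k) :=
    card_nbij' Prod.snd (fun j => (k, j)) (by intro p; simp +contextual) (by intro j; simp)
      (by intro p; simp +contextual) (by intro j; simp)
  have hsnd : #{p ∈ {p : Fin n × Fin n | p.1 < p.2} | k = p.2} = #(Iio k) :=
    card_nbij' Prod.fst (fun i => (i, k)) (by intro p; simp +contextual) (by intro j; simp)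
      (by intro p; simp +contextual) (by intro j; simp)
  simp only [root, sum_sub_distrib, Pi.sub_apply, Finset.sum_apply, Pi.single_apply, sum_boole,
    hfst, hsnd, Fin.card_Ioi, Fin.card_Iio, twoRho]
  have := k.is_lt
  omega

theorem injOn_root_filter_fst_lt_snd (n : ℕ) :
    Set.InjOn root (univ.filter fun p : Fin n × Fin n => p.1 < p.2 : Set (Fin n × Fin n)) :=
  fun _ hp _ _ h => (root_inj (mem_filter.mp (mem_coe.mp hp)).2.ne).mp h

theorem card_posRoots (n : ℕ) : #(posRoots n) = n * (n - 1) / 2 := by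
  rw [posRoots, card_image_of_injOn (injOn_root_filter_fst_lt_snd n), card_filter_fst_lt_snd]

theorem sum_posRoots (n : ℕ) : ∑ v ∈ posRoots n, v = twoRho n := by
  rw [posRoots, sum_image (injOn_root_filter_fst_lt_snd n), sum_root_filter_fst_lt_snd]

theorem posRoots_eq_filter (n : ℕ) :
    posRoots n = (univ.image root).filter (0 < · ⬝ᵥ twoRho n) := by
  rw [posRoots, filter_image]
  congr 1
  refine filter_congr fun ⟨i, j⟩ _ => ?_
  change i < j ↔ _
  rw [root_dotProduct_twoRho, Fin.lt_def]
  omega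

theorem stmt_9_general (n : ℕ) (S : Finset (Fin n → ℤ))
    (hroots : ∀ v ∈ S, ∃ i j : Fin n, i ≠ j ∧ v = Pi.single i 1 - Pi.single j 1)
    (hsum : (∑ v ∈ S, v) = fun k : Fin n => (n : ℤ) - 1 - 2 * ((k : ℕ) : ℤ)) :
    S.card = n * (n - 1) / 2 ∧
      S = (Finset.univ.filter fun p : Fin n × Fin n => p.1 < p.2).image
            (fun p => Pi.single p.1 1 - Pi.single p.2 1) := by
  have hsub : S ⊆ univ.image root := fun v hv => by
    obtain ⟨i, j, -, rfl⟩ := hroots v hv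
    exact mem_image_of_mem root (mem_univ (i, j))
  have hne : ∀ v ∈ S, v ⬝ᵥ twoRho n ≠ 0 := fun v hv => by
    obtain ⟨i, j, hij, rfl⟩ := hroots v hv
    change root (i, j) ⬝ᵥ twoRho n ≠ 0
    rw [root_dotProduct_twoRho]
    have : (i : ℕ) ≠ j := Fin.val_ne_of_ne hij
    omega
  have hS : S = posRoots n := by
    rw [posRoots_eq_filter]
    refine eq_filter_pos_of_sum_filter_pos_le hsub hne (le_of_eq ?_)
    rw [← posRoots_eq_filter, ← sum_dotProduct, ← sum_dotProduct, sum_posRoots, hsum]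
    rfl
  exact ⟨hS ▸ card_posRoots n, hS⟩

/-- If `α₁, …, α_r` are pairwise distinct roots `ε_i − ε_j` of `gl(n,ℂ)` with
`r ≤ n(n−1)/2` and sum `(n−1, n−3, …, 1−n)`, then `r = n(n−1)/2` and the set of roots is
the set of all positive roots `{ε_i − ε_j : i < j}`. -/
theorem stmt_9 (n : ℕ) (hn : 2 ≤ n) (S : Finset (Fin n → ℤ))
    (hroots : ∀ v ∈ S, ∃ i j : Fin n, i ≠ j ∧ v = Pi.single i 1 - Pi.single j 1)
    (hcard : S.card ≤ n * (n - 1) / 2)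
    (hsum : (∑ v ∈ S, v) = fun k : Fin n => (n : ℤ) - 1 - 2 * ((k : ℕ) : ℤ)) :
    S.card = n * (n - 1) / 2 ∧
      S = (Finset.univ.filter fun p : Fin n × Fin n => p.1 < p.2).image
            (fun p => Pi.single p.1 1 - Pi.single p.2 1) :=
  stmt_9_general n S hroots hsum
end
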